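/- Proposition 1, Equation (15): for every plant G over Σ, supervisor realization R, attack automaton A, and the arena 𝒜 constructed from G and A, and for every s ∈ P_{Σ_mΣ_{o,e}}(L(G_a||R_a||A)), the run H₂(x₀, s, γ₁…γ_{|s|}) is defined, where x₀ = h₁(q₀, C_R(ε)) and γ_i = C_R(P^S(s^i)) with s^i the length-i prefix of s. -/

import Mathlib

attribute [local instance] Classical.propDecidable

noncomputable section

namespace RobustDES

/-- Events of the attacked system `Σ_m = Σ ∪ Σ_a^i ∪ Σ_a^d`:
`plain a` is a legitimate event `a ∈ Σ`, `ins a` is the inserted copy `a_i`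
and `del a` is the deleted copy `a_d`. -/
inductive Ev (S : Type) : Type
  | plain : S → Ev S
  | ins : S → Ev S
  | del : S → Ev S

/-- Extension of a partial transition function to strings. -/
def run {X E : Type} (δ : X → E → Option X) : X → List E → Option X
  | x, [] => some x
  | x, e :: s => (δ x e).bind fun y => run δ y s

/-- The language generated by a partial automaton `(X, δ, x0)`. -/
def Lang {X E : Type} (δ : X → E → Option X) (x0 : X) : Set (List E) :=
  { s | (run δ x0 s).isSome }

variable {S XG XR XA : Type}

/-- The projection `P^G : Σ_m* → Σ*` (`a, a_d ↦ a`, `a_i ↦ ε`). -/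
def PGproj : List (Ev S) → List S := fun s =>
  s.flatMap fun e =>
    match e with
    | .plain a => [a]
    | .del a => [a]
    | .ins _ => []

/-- The projection `P^S : Σ_m* → Σ*` (`a, a_i ↦ a`, `a_d ↦ ε`). -/
def PSproj : List (Ev S) → List S := fun s =>
  s.flatMap fun e =>
    match e with
    | .plain a => [a]
    | .ins a => [a]
    | .del _ => []

/-- Natural projection `P_{ΣΣo}` erasing events not in `So`. -/
def projOn (So : Set S) (s : List S) : List S :=
  s.filter fun e => decide (e ∈ So)

/-- Membership of a tagged event in `Σ_{o,e} = Σ_o ∪ Σ_a^i ∪ Σ_a^d`. -/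
def inOe (So Sa : Set S) : Ev S → Prop
  | .plain a => a ∈ So
  | .ins a => a ∈ Sa
  | .del a => a ∈ Sa

/-- Natural projection `P_{Σ_mΣ_{o,e}}` erasing the unobservable events `Σ_uo`. -/
def projOe (So : Set S) : List (Ev S) → List (Ev S) := fun s =>
  s.flatMap fun e =>
    match e with
    | .plain a => if a ∈ So then [Ev.plain a] else []
    | e => [e]

/-- Transition function of the attacked plant `G_a` (over `Σ_m`):
`δ_{G_a}(x,e) = δ_G(x, P^G(e))`. -/
def δGa (Sa : Set S) (δG : XG → S → Option XG) : XG → Ev S → Option XG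
  | x, .plain a => δG x a
  | x, .del a => if a ∈ Sa then δG x a else none
  | x, .ins a => if a ∈ Sa then some x else none

/-- Active (legitimate) event set of a supervisor state. -/
def ΓR (δR : XR → S → Option XR) (y : XR) : Set S := {e | (δR y e).isSome}

/-- Transition function of the attacked supervisor `R_a` (over `Σ_m`). -/
def δRa (Sa : Set S) (δR : XR → S → Option XR) : XR → Ev S → Option XR
  | y, .plain a => δR y a
  | y, .ins a =>
      if a ∈ Sa then (if (δR y a).isSome then δR y a else some y) else none
  | y, .del a =>
      if a ∈ Sa then (if (δR y a).isSome then some y else none) else none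

/-- `R` is a supervisor realization: every uncontrollable event is enabled
everywhere and enabled unobservable events self-loop. -/
def IsSupRealization (So Suc : Set S) (δR : XR → S → Option XR) : Prop :=
  (∀ x e, e ∈ Suc → (δR x e).isSome) ∧
  (∀ x e, e ∉ So → (δR x e).isSome → δR x e = some x)

/-- `A` is an attack automaton over `Σ_{o,e}`: it is complete on `Σ_o \ Σ_a`,
for every `e ∈ Σ_a` either `e` or `e_d` is defined, and it is undefined outside
`Σ_{o,e}`. -/
def IsAttack (So Sa : Set S) (δA : XA → Ev S → Option XA) : Prop :=
  (∀ q a, a ∈ So → a ∉ Sa → (δA q (.plain a)).isSome) ∧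
  (∀ q a, a ∈ Sa → ((δA q (.plain a)).isSome ∨ (δA q (.del a)).isSome)) ∧
  (∀ q e, ¬ inOe So Sa e → δA q e = none)

/-- Transition function of the composition `G_a || R_a || A` over `Σ_m`:
all three components move on events of `Σ_{o,e}`, only `G_a` and `R_a` move on
unobservable events. -/
def δGRA (So Sa : Set S) (δG : XG → S → Option XG) (δR : XR → S → Option XR)
    (δA : XA → Ev S → Option XA) :
    XG × XR × XA → Ev S → Option (XG × XR × XA) := fun p e =>
  match e with
  | .plain a =>
    if a ∈ So then
      match δGa Sa δG p.1 (.plain a), δRa Sa δR p.2.1 (.plain a), δA p.2.2 (.plain a) with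
      | some x, some y, some z => some (x, y, z)
      | _, _, _ => none
    else
      match δGa Sa δG p.1 (.plain a), δRa Sa δR p.2.1 (.plain a) with
      | some x, some y => some (x, y, p.2.2)
      | _, _ => none
  | e =>
      match δGa Sa δG p.1 e, δRa Sa δR p.2.1 e, δA p.2.2 e with
      | some x, some y, some z => some (x, y, z)
      | _, _, _ => none

/-- Transition function of the composition `G_a || R_a` over `Σ_m`. -/
def δGaRa (Sa : Set S) (δG : XG → S → Option XG) (δR : XR → S → Option XR) :
    XG × XR → Ev S → Option (XG × XR) := fun p e =>
  match δGa Sa δG p.1 e, δRa Sa δR p.2 e with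
  | some x, some y => some (x, y)
  | _, _ => none

/-- `R` is robust w.r.t. `G`, `X_crit` and `A`:
`δ_G(x_{0,G}, s) ∉ X_crit` for every `s ∈ L(S_A/G) = P^G(L(G_a||R_a||A))`. -/
def Robust (So Sa : Set S) (Xcrit : Set XG)
    (δG : XG → S → Option XG) (x0G : XG)
    (δR : XR → S → Option XR) (x0R : XR)
    (δA : XA → Ev S → Option XA) (x0A : XA) : Prop :=
  ∀ t ∈ Lang (δGRA So Sa δG δR δA) (x0G, x0R, x0A),
    ∀ x, run δG x0G (PGproj t) = some x → x ∉ Xcrit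

/-- Total extension `Δ_R` of `δ_R` over observable strings. -/
def ΔRrun (δR : XR → S → Option XR) : XR → List S → XR
  | y, [] => y
  | y, e :: s => ΔRrun δR ((δR y e).getD y) s

/-- Control decision `C_R(s) = Γ_R(Δ_R(x_{0,R}, s))`. -/
def CR (δR : XR → S → Option XR) (x0R : XR) (s : List S) : Set S :=
  {e | (δR (ΔRrun δR x0R s) e).isSome}

/-- The state estimate under attack
`RE(s) = {x : x = δ_{G_a}(x_{0,G}, t), t ∈ P⁻¹_{Σ_mΣ_{o,e}}(s) ∩ L(G_a||R_a||A)}`. -/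
def RE (So Sa : Set S) (δG : XG → S → Option XG) (x0G : XG)
    (δR : XR → S → Option XR) (x0R : XR)
    (δA : XA → Ev S → Option XA) (x0A : XA) (s : List (Ev S)) : Set XG :=
  {x | ∃ t, projOe So t = s ∧ t ∈ Lang (δGRA So Sa δG δR δA) (x0G, x0R, x0A) ∧
        run (δGa Sa δG) x0G t = some x}

/-! ### The arena -/

/-- Unobservable reach `UR_γ(Q)`. -/
def URch (So : Set S) (δG : XG → S → Option XG) (γ : Set S) (Q : Set XG) : Set XG :=
  {x | ∃ t : List S, (∀ a ∈ t, a ∉ So ∧ a ∈ γ) ∧ ∃ q ∈ Q, run δG q t = some x}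

/-- Observable reach `NX_e(Q)`. -/
def NXr (δG : XG → S → Option XG) (a : S) (Q : Set XG) : Set XG :=
  {x | ∃ q ∈ Q, δG q a = some x}

/-- Active event set `Γ_G(Q)` of a set of plant states. -/
def ΓGset (δG : XG → S → Option XG) (Q : Set XG) : Set S :=
  {a | ∃ x ∈ Q, (δG x a).isSome}

/-- Player-1 states of the arena. -/
abbrev AQ1 (XG XA : Type) := Set XG × XA

/-- Player-2 states of the arena. -/
abbrev AQ2 (S XG XA : Type) := Set XG × XA × Set S × Option S

/-- Player-1 transition `h₁((S₁,S₂),γ) = (UR_γ(S₁), S₂, γ, ε)`. -/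
def h1 (So : Set S) (δG : XG → S → Option XG) (p : AQ1 XG XA) (γ : Set S) :
    AQ2 S XG XA :=
  (URch So δG γ p.1, p.2, γ, none)

/-- Player-2 transition `h₂`. -/
def h2 (So Sa : Set S) (δG : XG → S → Option XG) (δA : XA → Ev S → Option XA)
    (q : AQ2 S XG XA) : Ev S → Option (AQ1 XG XA ⊕ AQ2 S XG XA)
  | .plain a =>
    if a ∈ So then
      if q.2.2.2 = some a then some (Sum.inl (q.1, q.2.1))
      else if q.2.2.2 = none ∧ a ∈ ΓGset δG q.1 ∧ a ∈ q.2.2.1 then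
        (δA q.2.1 (.plain a)).map fun z => Sum.inl (NXr δG a q.1, z)
      else none
    else none
  | .ins a =>
    if a ∈ Sa ∧ q.2.2.2 = none then
      (δA q.2.1 (.ins a)).map fun z => Sum.inr (q.1, z, q.2.2.1, some a)
    else none
  | .del a =>
    if a ∈ Sa ∧ q.2.2.2 = none ∧ a ∈ ΓGset δG q.1 ∧ a ∈ q.2.2.1 then
      (δA q.2.1 (.del a)).map fun z =>
        Sum.inr (URch So δG q.2.2.1 (NXr δG a q.1), z, q.2.2.1, none)
    else none

/-- One-step map `H₂ : Q₂ × Σ_{o,e} × Γ ⇀ Q₂` of Definition 6. -/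
def H2 (So Sa : Set S) (δG : XG → S → Option XG) (δA : XA → Ev S → Option XA)
    (q : AQ2 S XG XA) : Ev S → Set S → Option (AQ2 S XG XA)
  | .plain a, γ =>
      (h2 So Sa δG δA q (.plain a)).bind fun r =>
        match r with
        | .inl p => some (h1 So δG p γ)
        | .inr _ => none
  | .del a, _ =>
      (h2 So Sa δG δA q (.del a)).bind fun r =>
        match r with
        | .inr q' => some q'
        | .inl _ => none
  | .ins a, γ =>
      (h2 So Sa δG δA q (.ins a)).bind fun r =>
        match r with
        | .inr q' =>
            (h2 So Sa δG δA q' (.plain a)).bind fun r2 =>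
              match r2 with
              | .inl p => some (h1 So δG p γ)
              | .inr _ => none
        | .inl _ => none

/-- Extension of `H₂` to strings with a sequence of control decisions. -/
def H2run (So Sa : Set S) (δG : XG → S → Option XG) (δA : XA → Ev S → Option XA) :
    AQ2 S XG XA → List (Ev S) → List (Set S) → Option (AQ2 S XG XA)
  | q, [], [] => some q
  | q, e :: s, γ :: γs =>
      (H2 So Sa δG δA q e γ).bind fun q' => H2run So Sa δG δA q' s γs
  | _, _ :: _, [] => none
  | _, [], _ :: _ => none

/-- The sequence of control decisions `γ_i = C_R(P^S(s^i))`, `i = 1, …, |s|`. -/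
def ctrlSeq (δR : XR → S → Option XR) (x0R : XR) (s : List (Ev S)) : List (Set S) :=
  (List.range s.length).map fun i => CR δR x0R (PSproj (s.take (i + 1)))

/-- Initial arena state `q₀ = ({x_{0,G}}, x_{0,A})`. -/
def arenaInit (x0G : XG) (x0A : XA) : AQ1 XG XA := ({x0G}, x0A)

/-- The arena `𝒜` regarded as a partial automaton over `E = Γ ∪ Σ_{o,e}`. -/
def δAr (So Suc Sa : Set S) (δG : XG → S → Option XG) (δA : XA → Ev S → Option XA) :
    (AQ1 XG XA ⊕ AQ2 S XG XA) → (Set S ⊕ Ev S) → Option (AQ1 XG XA ⊕ AQ2 S XG XA)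
  | .inl p, .inl γ => if Suc ⊆ γ then some (.inr (h1 So δG p γ)) else none
  | .inr q, .inr e => h2 So Sa δG δA q e
  | _, _ => none

/-- The projection `I₁` onto the plant state-estimate component. -/
def I1 : (AQ1 XG XA ⊕ AQ2 S XG XA) → Set XG := Sum.elim Prod.fst Prod.fst

/-- The projection `I₂` onto the attacker-state component. -/
def I2 : (AQ1 XG XA ⊕ AQ2 S XG XA) → XA := Sum.elim (fun p => p.2) (fun q => q.2.1)

/-- The language `L(𝒜)` of the arena. -/
def LA (So Suc Sa : Set S) (δG : XG → S → Option XG) (δA : XA → Ev S → Option XA)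
    (x0G : XG) (x0A : XA) : Set (List (Set S ⊕ Ev S)) :=
  Lang (δAr So Suc Sa δG δA) (Sum.inl (arenaInit x0G x0A))

/-- The language `L(𝒜^{trim})`: strings of `L(𝒜)` whose runs visit no state `q`
with `I₁(q) ∩ X_crit ≠ ∅`. -/
def LAtrim (So Suc Sa : Set S) (δG : XG → S → Option XG)
    (δA : XA → Ev S → Option XA) (x0G : XG) (x0A : XA) (Xcrit : Set XG) :
    Set (List (Set S ⊕ Ev S)) :=
  {s | s ∈ LA So Suc Sa δG δA x0G x0A ∧
    ∀ u, u <+: s → ∀ st, run (δAr So Suc Sa δG δA) (Sum.inl (arenaInit x0G x0A)) u =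
      some st → I1 st ∩ Xcrit = ∅}

/-- The controllable meta-events `E_c = Γ \ {Σ_uc}`. -/
def Ec (Suc : Set S) : Set (Set S ⊕ Ev S) :=
  {a | ∃ γ : Set S, a = Sum.inl γ ∧ Suc ⊆ γ ∧ γ ≠ Suc}

/-- `K` is controllable w.r.t. `L` and the uncontrollable events `Euc`. -/
def ControllableLang {E : Type} (L : Set (List E)) (Euc : Set E)
    (K : Set (List E)) : Prop :=
  ∀ s ∈ K, ∀ a ∈ Euc, s ++ [a] ∈ L → s ++ [a] ∈ K

/-- `K` is normal w.r.t. the projection `P` and `L`: `K = P⁻¹(P(K)) ∩ L`. -/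
def NormalLang {E : Type} (P : List E → List E) (L K : Set (List E)) : Prop :=
  K = {s | s ∈ L ∧ ∃ t ∈ K, P t = P s}

/-- Natural projection of meta-strings onto the observable meta-events
`E_o = E \ Σ_a^e`. -/
def projEo : List (Set S ⊕ Ev S) → List (Set S ⊕ Ev S) := fun s =>
  s.flatMap fun a =>
    match a with
    | Sum.inr (.ins _) => []
    | Sum.inr (.del _) => []
    | a => [a]

/-- `L(𝒜^{sup})`: the union of all sublanguages of `L(𝒜^{trim})` that are
controllable w.r.t. `L(𝒜)` and `E \ E_c` and normal w.r.t. `E_o` and `L(𝒜)`. -/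
def Lsup (So Suc Sa : Set S) (δG : XG → S → Option XG)
    (δA : XA → Ev S → Option XA) (x0G : XG) (x0A : XA) (Xcrit : Set XG) :
    Set (List (Set S ⊕ Ev S)) :=
  ⋃₀ {K | K ⊆ LAtrim So Suc Sa δG δA x0G x0A Xcrit ∧
      ControllableLang (LA So Suc Sa δG δA x0G x0A) (Ec Suc)ᶜ K ∧
      NormalLang projEo (LA So Suc Sa δG δA x0G x0A) K}

/-- The run word `W(s; γ₀, …, γ_{|s|})` in the arena. -/
def Wword (γ0 : Set S) (s : List (Ev S)) (γs : List (Set S)) :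
    List (Set S ⊕ Ev S) :=
  Sum.inl γ0 :: (s.zip γs).flatMap fun p =>
    match p.1 with
    | .plain a => [Sum.inr (Ev.plain a), Sum.inl p.2]
    | .del a => [Sum.inr (Ev.del a)]
    | .ins a => [Sum.inr (Ev.ins a), Sum.inr (Ev.plain a), Sum.inl p.2]

/-- The projection `η : E* → Σ_o*` erasing all meta-events not in `Σ_o`. -/
def ηproj (So : Set S) : List (Set S ⊕ Ev S) → List S := fun s =>
  s.flatMap fun a =>
    match a with
    | Sum.inr (.plain e) => if e ∈ So then [e] else []
    | _ => []


/-- The all-out attack strategy: a single state with every event of `Σ_{o,e}`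
defined (as a self-loop). -/
def allOutδ (So Sa : Set S) : Unit → Ev S → Option Unit := fun _ e =>
  if inOe So Sa e then some () else none

/-- The supervisor extracted from a generator of `L(𝒜^{sup})` by a choice
function `c` of control decisions (Algorithm 1): on an observable enabled event
follow the arena (choose `c y`, then the event), on an unobservable enabled
event self-loop, and disable events outside `c y`. -/
def extractR {Y : Type} (So : Set S) (δg : Y → (Set S ⊕ Ev S) → Option Y)
    (c : Y → Set S) : Y → S → Option Y := fun y a =>
  if a ∈ c y then
    if a ∈ So then
      some (((δg y (Sum.inl (c y))).bind fun y' =>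
        δg y' (Sum.inr (Ev.plain a))).getD y)
    else some y
  else none

/-- The language `L_R` built inductively from a supervisor `R` inside the arena:
`ε ∈ L_R`; from a player-2 state every event of `Σ_{o,e}` feasible in `𝒜` may be
appended; from a player-1 state the control decisions `Σ_uc` and `C_R(η(s))`
may be appended. -/
inductive LRmem {S XG XA XR : Type} (So Suc Sa : Set S)
    (δG : XG → S → Option XG) (x0G : XG)
    (δA : XA → Ev S → Option XA) (x0A : XA)
    (δR : XR → S → Option XR) (x0R : XR) : List (Set S ⊕ Ev S) → Prop
  | nil : LRmem So Suc Sa δG x0G δA x0A δR x0R []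
  | p2 (s : List (Set S ⊕ Ev S)) (q : AQ2 S XG XA) (e : Ev S) :
      LRmem So Suc Sa δG x0G δA x0A δR x0R s →
      run (δAr So Suc Sa δG δA) (Sum.inl (arenaInit x0G x0A)) s = some (Sum.inr q) →
      inOe So Sa e →
      (run (δAr So Suc Sa δG δA) (Sum.inl (arenaInit x0G x0A))
        (s ++ [Sum.inr e])).isSome →
      LRmem So Suc Sa δG x0G δA x0A δR x0R (s ++ [Sum.inr e])
  | p1uc (s : List (Set S ⊕ Ev S)) (p : AQ1 XG XA) :
      LRmem So Suc Sa δG x0G δA x0A δR x0R s →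
      run (δAr So Suc Sa δG δA) (Sum.inl (arenaInit x0G x0A)) s = some (Sum.inl p) →
      LRmem So Suc Sa δG x0G δA x0A δR x0R (s ++ [Sum.inl Suc])
  | p1R (s : List (Set S ⊕ Ev S)) (p : AQ1 XG XA) :
      LRmem So Suc Sa δG x0G δA x0A δR x0R s →
      run (δAr So Suc Sa δG δA) (Sum.inl (arenaInit x0G x0A)) s = some (Sum.inl p) →
      LRmem So Suc Sa δG x0G δA x0A δR x0R (s ++ [Sum.inl (CR δR x0R (ηproj So s))])

/-! Along every run of `G_a || R_a || A` with closed-loop state `(x, y, z)`, the arena state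
reached by `H₂` on the observed string stays in step with it: its attacker component is `z`,
its control decision is `Γ_R(y)` (which is `C_R(P^S(s))`, as `R` self-loops on unobservable
events), and its plant estimate is an unobservable reach containing `x`. So every event the
closed loop executes can be replayed in the arena: an observable or deleted event is enabled
at `y` and active at `x`, and an inserted event only needs `Σ_a ⊆ Σ_o`. -/

lemma run_append_singleton {X E : Type} (δ : X → E → Option X) (x : X) (t : List E) (e : E) :
    run δ x (t ++ [e]) = (run δ x t).bind fun y => δ y e := by
  induction t generalizing x with
  | nil => simp [run]
  | cons f t ih =>
    simp only [List.cons_append, run]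
    cases δ x f <;> simp [ih]

lemma ΔRrun_append (δR : XR → S → Option XR) (y : XR) (l l' : List S) :
    ΔRrun δR y (l ++ l') = ΔRrun δR (ΔRrun δR y l) l' := by
  induction l generalizing y with
  | nil => rfl
  | cons b l ih => exact ih _

lemma CR_eq_ΓR (δR : XR → S → Option XR) (x0R : XR) (l : List S) :
    CR δR x0R l = ΓR δR (ΔRrun δR x0R l) :=
  rfl

lemma projOe_append (So : Set S) (t u : List (Ev S)) :
    projOe So (t ++ u) = projOe So t ++ projOe So u :=
  List.flatMap_append ..

lemma PSproj_append (t u : List (Ev S)) :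
    PSproj (t ++ u) = PSproj t ++ PSproj u :=
  List.flatMap_append ..

lemma ctrlSeq_length (δR : XR → S → Option XR) (x0R : XR) (s : List (Ev S)) :
    (ctrlSeq δR x0R s).length = s.length := by
  simp [ctrlSeq]

lemma ctrlSeq_append_singleton (δR : XR → S → Option XR) (x0R : XR) (s : List (Ev S))
    (e : Ev S) :
    ctrlSeq δR x0R (s ++ [e]) = ctrlSeq δR x0R s ++ [CR δR x0R (PSproj (s ++ [e]))] := by
  unfold ctrlSeq
  rw [List.length_append, List.length_singleton, List.range_succ, List.map_append]
  congr 1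
  · refine List.map_congr_left fun i hi => ?_
    rw [List.take_append_of_le_length (by simp at hi; omega)]
  · rw [List.map_singleton, List.take_of_length_le (by simp)]

lemma H2run_append_singleton (So Sa : Set S) (δG : XG → S → Option XG)
    (δA : XA → Ev S → Option XA) (q : AQ2 S XG XA) (s : List (Ev S))
    (γs : List (Set S)) (h : s.length = γs.length) (e : Ev S) (γ : Set S) :
    H2run So Sa δG δA q (s ++ [e]) (γs ++ [γ]) =
      (H2run So Sa δG δA q s γs).bind fun q' => H2 So Sa δG δA q' e γ := by
  induction s generalizing q γs with
  | nil =>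
    obtain rfl : γs = [] := List.eq_nil_of_length_eq_zero h.symm
    simp only [List.nil_append, H2run, Option.bind_some]
    cases H2 So Sa δG δA q e γ <;> rfl
  | cons f s ih =>
    obtain _ | ⟨γ₀, γs⟩ := γs
    · simp at h
    simp only [List.cons_append, H2run]
    cases H2 So Sa δG δA q f γ₀ with
    | none => rfl
    | some q' => exact ih q' γs (by simpa using h)

section Reach

variable (So : Set S) (δG : XG → S → Option XG) (γ : Set S) {Q : Set XG}

lemma mem_URch_of_mem {x : XG} (h : x ∈ Q) : x ∈ URch So δG γ Q :=
  ⟨[], by simp, x, h, rfl⟩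

lemma mem_URch_of_step {x x' : XG} {a : S} (h : x ∈ URch So δG γ Q)
    (ha : a ∉ So) (hγ : a ∈ γ) (hx : δG x a = some x') : x' ∈ URch So δG γ Q := by
  obtain ⟨t, ht, q, hq, hrun⟩ := h
  refine ⟨t ++ [a], ?_, q, hq, by rw [run_append_singleton, hrun]; exact hx⟩
  simp only [List.mem_append, List.mem_singleton]
  rintro b (hb | rfl)
  exacts [ht b hb, ⟨ha, hγ⟩]

end Reach

section Simulation

variable {So Sa : Set S} {δG : XG → S → Option XG} {δR : XR → S → Option XR}
  {δA : XA → Ev S → Option XA} {x x' : XG} {y y' : XR} {z z' : XA} {a : S}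

lemma δGRA_plain_of_mem (ha : a ∈ So)
    (h : δGRA So Sa δG δR δA (x, y, z) (.plain a) = some (x', y', z')) :
    δG x a = some x' ∧ δR y a = some y' ∧ δA z (.plain a) = some z' := by
  simp only [δGRA, δGa, δRa, if_pos ha] at h
  split at h <;> simp_all

lemma δGRA_plain_of_not_mem (ha : a ∉ So)
    (h : δGRA So Sa δG δR δA (x, y, z) (.plain a) = some (x', y', z')) :
    δG x a = some x' ∧ δR y a = some y' ∧ z' = z := by
  simp only [δGRA, δGa, δRa, if_neg ha] at h
  split at h <;> simp_all

lemma δGRA_ins (h : δGRA So Sa δG δR δA (x, y, z) (.ins a) = some (x', y', z')) :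
    a ∈ Sa ∧ x' = x ∧ y' = (δR y a).getD y ∧ δA z (.ins a) = some z' := by
  simp only [δGRA, δGa, δRa] at h
  by_cases ha : a ∈ Sa
  · cases hy : δR y a <;> simp only [ha, hy, if_true] at h <;> split at h <;> simp_all
  · simp [ha] at h

lemma δGRA_del (h : δGRA So Sa δG δR δA (x, y, z) (.del a) = some (x', y', z')) :
    a ∈ Sa ∧ δG x a = some x' ∧ (δR y a).isSome ∧ y' = y ∧ δA z (.del a) = some z' := by
  simp only [δGRA, δGa, δRa] at h
  by_cases ha : a ∈ Sa
  · cases hy : δR y a <;> simp only [ha, hy, if_true] at h <;> split at h <;> simp_all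
  · simp [ha] at h

variable (So δG δR) in
def Simulates (q : AQ2 S XG XA) (p : XG × XR × XA) : Prop :=
  ∃ Q : Set XG, q = (URch So δG (ΓR δR p.2.1) Q, p.2.2, ΓR δR p.2.1, none) ∧
    p.1 ∈ URch So δG (ΓR δR p.2.1) Q

lemma simulates_init (x0G : XG) (x0R : XR) (x0A : XA) :
    Simulates So δG δR (h1 So δG (arenaInit x0G x0A) (CR δR x0R [])) (x0G, x0R, x0A) :=
  ⟨{x0G}, rfl, mem_URch_of_mem _ _ _ rfl⟩

namespace Simulates

variable {q : AQ2 S XG XA}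

lemma plain_of_not_mem (hR : ∀ y e, e ∉ So → (δR y e).isSome → δR y e = some y)
    (ha : a ∉ So) (hq : Simulates So δG δR q (x, y, z))
    (h : δGRA So Sa δG δR δA (x, y, z) (.plain a) = some (x', y', z')) :
    y' = y ∧ Simulates So δG δR q (x', y', z') := by
  obtain ⟨hG, hy, rfl⟩ := δGRA_plain_of_not_mem ha h
  obtain rfl : y' = y := Option.some.inj <| hy.symm.trans <| hR y a ha (by simp [hy])
  obtain ⟨Q, rfl, hx⟩ := hq
  exact ⟨rfl, Q, rfl, mem_URch_of_step _ _ _ hx ha (by simp [ΓR, hy]) hG⟩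

lemma plain_of_mem (ha : a ∈ So) (hq : Simulates So δG δR q (x, y, z))
    (h : δGRA So Sa δG δR δA (x, y, z) (.plain a) = some (x', y', z')) :
    ΔRrun δR y [a] = y' ∧
      ∃ q', H2 So Sa δG δA q (.plain a) (ΓR δR y') = some q' ∧
        Simulates So δG δR q' (x', y', z') := by
  obtain ⟨hG, hy, hz⟩ := δGRA_plain_of_mem ha h
  obtain ⟨Q, rfl, hx⟩ := hq
  have haΓ : a ∈ ΓGset δG (URch So δG (ΓR δR y) Q) := ⟨x, hx, by simp [hG]⟩
  have haγ : a ∈ ΓR δR y := by simp [ΓR, hy]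
  refine ⟨by simp [ΔRrun, hy], _, ?_, NXr δG a (URch So δG (ΓR δR y) Q), rfl,
    mem_URch_of_mem _ _ _ ⟨x, hx, hG⟩⟩
  simp [H2, h2, h1, ha, haΓ, haγ, hz]

lemma ins (hSa : Sa ⊆ So) (hq : Simulates So δG δR q (x, y, z))
    (h : δGRA So Sa δG δR δA (x, y, z) (.ins a) = some (x', y', z')) :
    ΔRrun δR y [a] = y' ∧
      ∃ q', H2 So Sa δG δA q (.ins a) (ΓR δR y') = some q' ∧
        Simulates So δG δR q' (x', y', z') := by
  obtain ⟨ha, rfl, rfl, hz⟩ := δGRA_ins h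
  obtain ⟨Q, rfl, hx⟩ := hq
  refine ⟨rfl, _, ?_, URch So δG (ΓR δR y) Q, rfl, mem_URch_of_mem _ _ _ hx⟩
  simp [H2, h2, h1, ha, hSa ha, hz]

lemma del (hq : Simulates So δG δR q (x, y, z))
    (h : δGRA So Sa δG δR δA (x, y, z) (.del a) = some (x', y', z')) :
    y' = y ∧
      ∃ q', H2 So Sa δG δA q (.del a) (ΓR δR y') = some q' ∧
        Simulates So δG δR q' (x', y', z') := by
  obtain ⟨ha, hG, hy, hyy, hz⟩ := δGRA_del h
  subst y'
  obtain ⟨Q, rfl, hx⟩ := hq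
  have haΓ : a ∈ ΓGset δG (URch So δG (ΓR δR y) Q) := ⟨x, hx, by simp [hG]⟩
  refine ⟨rfl, _, ?_, NXr δG a (URch So δG (ΓR δR y) Q), rfl,
    mem_URch_of_mem _ _ _ ⟨x, hx, hG⟩⟩
  simp [H2, h2, ha, haΓ, show a ∈ ΓR δR y from hy, hz]

lemma step {p p' : XG × XR × XA} {e : Ev S} (hSa : Sa ⊆ So)
    (hR : ∀ y e, e ∉ So → (δR y e).isSome → δR y e = some y)
    (hq : Simulates So δG δR q p) (h : δGRA So Sa δG δR δA p e = some p') :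
    ΔRrun δR p.2.1 (PSproj (projOe So [e])) = p'.2.1 ∧
      (projOe So [e] = [] ∧ Simulates So δG δR q p' ∨
        projOe So [e] = [e] ∧
          ∃ q', H2 So Sa δG δA q e (ΓR δR p'.2.1) = some q' ∧ Simulates So δG δR q' p') := by
  obtain ⟨x, y, z⟩ := p
  obtain ⟨x', y', z'⟩ := p'
  cases e with
  | plain a =>
    by_cases ha : a ∈ So
    · obtain ⟨hΔ, hobs⟩ := plain_of_mem ha hq h
      exact ⟨by simpa [projOe, PSproj, ha] using hΔ, .inr ⟨by simp [projOe, ha], hobs⟩⟩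
    · obtain ⟨rfl, hq'⟩ := plain_of_not_mem hR ha hq h
      exact ⟨by simp [projOe, PSproj, ha, ΔRrun], .inl ⟨by simp [projOe, ha], hq'⟩⟩
  | ins a =>
    obtain ⟨hΔ, hobs⟩ := ins hSa hq h
    exact ⟨hΔ, .inr ⟨rfl, hobs⟩⟩
  | del a =>
    obtain ⟨rfl, hobs⟩ := del hq h
    exact ⟨rfl, .inr ⟨rfl, hobs⟩⟩

end Simulates

lemma exists_H2run_simulates (hSa : Sa ⊆ So)
    (hR : ∀ y e, e ∉ So → (δR y e).isSome → δR y e = some y)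
    (x0G : XG) (x0R : XR) (x0A : XA) {t : List (Ev S)} {p : XG × XR × XA}
    (ht : run (δGRA So Sa δG δR δA) (x0G, x0R, x0A) t = some p) :
    ΔRrun δR x0R (PSproj (projOe So t)) = p.2.1 ∧
      ∃ q, H2run So Sa δG δA (h1 So δG (arenaInit x0G x0A) (CR δR x0R []))
          (projOe So t) (ctrlSeq δR x0R (projOe So t)) = some q ∧
        Simulates So δG δR q p := by
  induction t using List.reverseRecOn generalizing p with
  | nil =>
    cases ht
    exact ⟨rfl, _, rfl, simulates_init x0G x0R x0A⟩
  | append_singleton t e ih =>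
    obtain ⟨p₀, hp₀, hstep⟩ :=
      Option.bind_eq_some_iff.1 ((run_append_singleton ..).symm.trans ht)
    obtain ⟨hΔ, q, hH, hq⟩ := ih hp₀
    obtain ⟨hΔe, hobs⟩ := hq.step hSa hR hstep
    have hΔ' : ΔRrun δR x0R (PSproj (projOe So (t ++ [e]))) = p.2.1 := by
      rw [projOe_append, PSproj_append, ΔRrun_append, hΔ, hΔe]
    refine ⟨hΔ', ?_⟩
    rcases hobs with ⟨hunobs, hq'⟩ | ⟨hobs, q', hH', hq'⟩
    · rw [projOe_append, hunobs, List.append_nil]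
      exact ⟨q, hH, hq'⟩
    · rw [projOe_append, hobs] at hΔ' ⊢
      rw [ctrlSeq_append_singleton, CR_eq_ΓR _ _ (PSproj _), hΔ',
        H2run_append_singleton _ _ _ _ _ _ _ (ctrlSeq_length ..).symm, hH]
      exact ⟨q', hH', hq'⟩

end Simulation

theorem arena_run_defined_general
    (So Suc Sa : Set S) (hSa : Sa ⊆ So)
    (δG : XG → S → Option XG) (x0G : XG)
    (δR : XR → S → Option XR) (x0R : XR) (hR : IsSupRealization So Suc δR)
    (δA : XA → Ev S → Option XA) (x0A : XA)
    (s : List (Ev S))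
    (hs : s ∈ projOe So '' Lang (δGRA So Sa δG δR δA) (x0G, x0R, x0A)) :
    (H2run So Sa δG δA (h1 So δG (arenaInit x0G x0A) (CR δR x0R []))
      s (ctrlSeq δR x0R s)).isSome := by
  obtain ⟨t, ht, rfl⟩ := hs
  obtain ⟨p, hp⟩ := Option.isSome_iff_exists.1 ht
  obtain ⟨-, q, hq, -⟩ := exists_H2run_simulates hSa hR.2 x0G x0R x0A hp
  simp [hq]

/-- Proposition 1, Eq. (15): for every
`s ∈ P_{Σ_mΣ_{o,e}}(L(G_a||R_a||A))`, the arena run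
`H₂(x₀, s, γ₁…γ_{|s|})` is defined, where `x₀ = h₁(q₀, C_R(ε))` and
`γ_i = C_R(P^S(s^i))`. -/
theorem arena_run_defined
    [Finite S] [Finite XG] [Finite XR] [Finite XA]
    (So Suc Sa : Set S) (hSa : Sa ⊆ So)
    (δG : XG → S → Option XG) (x0G : XG)
    (δR : XR → S → Option XR) (x0R : XR) (hR : IsSupRealization So Suc δR)
    (δA : XA → Ev S → Option XA) (x0A : XA) (hA : IsAttack So Sa δA)
    (s : List (Ev S))
    (hs : s ∈ projOe So '' Lang (δGRA So Sa δG δR δA) (x0G, x0R, x0A)) :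
    (H2run So Sa δG δA (h1 So δG (arenaInit x0G x0A) (CR δR x0R []))
      s (ctrlSeq δR x0R s)).isSome :=
  arena_run_defined_general So Suc Sa hSa δG x0G δR x0R hR δA x0A s hs

end RobustDES
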